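/- arXiv:2112.08582 — 13 statements merged into one kernel-verified Lean document; each statement's English description precedes it below -/
import Mathlib

section
/- In any localisable semigroup, the law R(sR(t)) = R(s)R(t) holds for all s, t. -/
theorem stmt1 {S : Type*} [Semigroup S] (D R : S → S)
    (h1 : ∀ s : S, D s * s = s) (h1' : ∀ s : S, s * R s = s)
    (h2 : ∀ s : S, D (R s) = R s) (h2' : ∀ s : S, R (D s) = D s)
    (h3 : ∀ s t : S, D (s * t) = D (s * D t)) (h3' : ∀ s t : S, R (s * t) = R (R s * t))
    (h4 : ∀ s t : S, D (D s * D t) = D s * D t) :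
    ∀ s t : S, R (s * R t) = R s * R t := by
  intro s t
  have hd : D (R s * R t) = R s * R t := by
    have := h4 (R s) (R t); simpa [h2] using this
  calc R (s * R t) = R (R s * R t) := h3' s (R t)
    _ = R (D (R s * R t)) := by rw [hd]
    _ = R s * R t := by rw [h2', hd]
end

section
/- In any localisable semigroup S, the set D(S) = {D(s) : s ∈ S} equals {R(s) : s ∈ S} and is a band (a semigroup of idempotents) under multiplication. -/
theorem stmt2 {S : Type*} [Semigroup S] (D R : S → S)
    (h1 : ∀ s : S, D s * s = s) (h1' : ∀ s : S, s * R s = s)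
    (h2 : ∀ s : S, D (R s) = R s) (h2' : ∀ s : S, R (D s) = D s)
    (h3 : ∀ s t : S, D (s * t) = D (s * D t)) (h3' : ∀ s t : S, R (s * t) = R (R s * t))
    (h4 : ∀ s t : S, D (D s * D t) = D s * D t) :
    Set.range D = Set.range R ∧
      (∀ e ∈ Set.range D, ∀ f ∈ Set.range D, e * f ∈ Set.range D) ∧
      (∀ e ∈ Set.range D, e * e = e) := by
  refine ⟨?_, ?_, ?_⟩
  · ext x
    constructor
    · rintro ⟨s, rfl⟩; exact ⟨D s, h2' s⟩
    · rintro ⟨s, rfl⟩; exact ⟨R s, h2 s⟩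
  · rintro e ⟨s, rfl⟩ f ⟨t, rfl⟩
    exact ⟨D s * D t, h4 s t⟩
  · rintro e ⟨s, rfl⟩
    have hDD : D (D s) = D s := by
      have := h2 (D s)
      rw [h2' s] at this
      calc D (D s) = D (R (D s)) := by rw [h2' s]
        _ = R (D s) := h2 (D s)
        _ = D s := h2' s
    calc D s * D s = D (D s) * D s := by rw [hDD]
      _ = D s := h1 (D s)
end

section
/- Every ordered localisable semigroup is Ehresmann: the projections commute, i.e. D(s)D(t) = D(t)D(s) for all s, t. -/
theorem stmt3 {S : Type*} [Semigroup S] [PartialOrder S] (D R : S → S)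
    (h1 : ∀ s : S, D s * s = s) (h1' : ∀ s : S, s * R s = s)
    (h2 : ∀ s : S, D (R s) = R s) (h2' : ∀ s : S, R (D s) = D s)
    (h3 : ∀ s t : S, D (s * t) = D (s * D t)) (h3' : ∀ s t : S, R (s * t) = R (R s * t))
    (h4 : ∀ s t : S, D (D s * D t) = D s * D t)
    (hmono : ∀ a b : S, a ≤ b → D a ≤ D b ∧ R a ≤ R b)
    (hmul : ∀ a b c d : S, a ≤ b → c ≤ d → a * c ≤ b * d)
    (hos6 : ∀ (a : S), ∀ e ∈ Set.range D, a * e ≤ a ∧ e * a ≤ a)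
    (hosi : ∀ (a : S), ∀ e ∈ Set.range D, a ≤ e → a ∈ Set.range D) :
    ∀ s t : S, D s * D t = D t * D s := by
  intro s t
  -- D is idempotent on its range: D (D s) = D s
  have hDD : ∀ s : S, D (D s) = D s := by
    intro s
    calc D (D s) = D (R (D s)) := by rw [h2']
    _ = R (D s) := h2 _
    _ = D s := h2' _
  -- products of projections are projections, hence idempotent
  have hidem : ∀ u v : S, (D u * D v) * (D u * D v) = D u * D v := by
    intro u v
    have := h1 (D u * D v)
    rwa [h4] at this
  have hmem : ∀ u v : S, D u * D v ∈ Set.range D := fun u v => ⟨D u * D v, h4 u v⟩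
  have key : ∀ u v : S, D u * D v ≤ D v * D u := by
    intro u v
    have hle1 : D u * D v ≤ D u := (hos6 (D u) (D v) ⟨D v, hDD v⟩).1
    have hle2 : D u * D v ≤ D v := (hos6 (D v) (D u) ⟨D u, hDD u⟩).2
    calc D u * D v = (D u * D v) * (D u * D v) := (hidem u v).symm
    _ ≤ D v * D u := hmul _ _ _ _ hle2 hle1
  exact le_antisymm (key s t) (key t s)
end

section
/- In an Ehresmann semigroup, for all s, t: s ≤_e t if and only if s = D(s)tR(s), where s ≤_e t means s = gth for some projections g, h. -/
theorem stmt5 {S : Type*} [Semigroup S] (D R : S → S)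
    (h1 : ∀ s : S, D s * s = s) (h1' : ∀ s : S, s * R s = s)
    (h2 : ∀ s : S, D (R s) = R s) (h2' : ∀ s : S, R (D s) = D s)
    (h3 : ∀ s t : S, D (s * t) = D (s * D t)) (h3' : ∀ s t : S, R (s * t) = R (R s * t))
    (h4 : ∀ s t : S, D (D s * D t) = D s * D t)
    (hcomm : ∀ s t : S, D s * D t = D t * D s) :
    ∀ s t : S, (∃ g ∈ Set.range D, ∃ h ∈ Set.range D, s = g * t * h) ↔
      s = D s * t * R s := by
  intro s t
  constructor
  · rintro ⟨g, ⟨a, rfl⟩, h, ⟨b, rfl⟩, hs⟩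
    have hDD : ∀ x : S, D (D x) = D x := fun x => by rw [← h2' x, h2]
    have idem : ∀ x : S, D x * D x = D x := fun x => by
      have := h1 (D x); rwa [hDD] at this
    have hDs : D s = D a * D (t * D b) := by
      rw [hs, mul_assoc, h3, h4]
    have hDsg : D s * D a = D s := by
      rw [hDs, mul_assoc, hcomm (t * D b) a, ← mul_assoc, idem]
    have hRs : R s = R (D a * t) * D b := by
      rw [hs, h3', ← h2 (D a * t), ← h4 (R (D a * t)) b, h2']
    have hhRs : D b * R s = R s := by
      rw [hRs, ← mul_assoc, ← h2 (D a * t), hcomm b (R (D a * t)), mul_assoc, idem]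
    have key : D s * (D a * t * D b) * R s = D s * t * R s := by
      calc D s * (D a * t * D b) * R s
          = (D s * D a) * t * (D b * R s) := by simp only [mul_assoc]
        _ = D s * t * R s := by rw [hDsg, hhRs]
    calc s = D s * s * R s := by rw [h1, h1']
      _ = D s * (D a * t * D b) * R s := congrArg (fun x => D s * x * R s) hs
      _ = D s * t * R s := key
  · intro he
    exact ⟨D s, ⟨s, rfl⟩, R s, ⟨R s, h2 s⟩, he⟩
end

section
/- Any Ehresmann order ≤ on an Ehresmann semigroup S contains ≤_e: if s ≤_e t then s ≤ t. -/
theorem stmt6 {S : Type*} [Semigroup S] [PartialOrder S] (D R : S → S)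
    (h1 : ∀ s : S, D s * s = s) (h1' : ∀ s : S, s * R s = s)
    (h2 : ∀ s : S, D (R s) = R s) (h2' : ∀ s : S, R (D s) = D s)
    (h3 : ∀ s t : S, D (s * t) = D (s * D t)) (h3' : ∀ s t : S, R (s * t) = R (R s * t))
    (h4 : ∀ s t : S, D (D s * D t) = D s * D t)
    (hcomm : ∀ s t : S, D s * D t = D t * D s)
    (hmono : ∀ a b : S, a ≤ b → D a ≤ D b ∧ R a ≤ R b)
    (hmul : ∀ a b c d : S, a ≤ b → c ≤ d → a * c ≤ b * d)
    (hos6 : ∀ (a : S), ∀ e ∈ Set.range D, a * e ≤ a ∧ e * a ≤ a)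
    (hosi : ∀ (a : S), ∀ e ∈ Set.range D, a ≤ e → a ∈ Set.range D) :
    ∀ s t : S, (∃ g ∈ Set.range D, ∃ h ∈ Set.range D, s = g * t * h) → s ≤ t := by
  rintro s t ⟨g, hg, h, hh, rfl⟩
  exact le_trans ((hos6 (g * t) h hh).1) ((hos6 t g hg).2)
end

section
/- An Ehresmann semigroup S is de Barros (i.e., ≤_e is compatible with multiplication: x₁ ≤_e y₁ and x₂ ≤_e y₂ imply x₁x₂ ≤_e y₁y₂) if and only if for all s, t ∈ S and all projections e, set = D(set)·st·R(set). -/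
theorem stmt8 {S : Type*} [Semigroup S] (D R : S → S)
    (h1 : ∀ s : S, D s * s = s) (h1' : ∀ s : S, s * R s = s)
    (h2 : ∀ s : S, D (R s) = R s) (h2' : ∀ s : S, R (D s) = D s)
    (h3 : ∀ s t : S, D (s * t) = D (s * D t)) (h3' : ∀ s t : S, R (s * t) = R (R s * t))
    (h4 : ∀ s t : S, D (D s * D t) = D s * D t)
    (hcomm : ∀ s t : S, D s * D t = D t * D s) :
    (∀ x₁ y₁ x₂ y₂ : S, x₁ = D x₁ * y₁ * R x₁ → x₂ = D x₂ * y₂ * R x₂ →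
        x₁ * x₂ = D (x₁ * x₂) * (y₁ * y₂) * R (x₁ * x₂)) ↔
    (∀ (s t : S), ∀ e ∈ Set.range D,
        s * e * t = D (s * e * t) * (s * t) * R (s * e * t)) := by
  -- D is idempotent on its image
  have hDD : ∀ s : S, D (D s) = D s := by
    intro s
    have := h2 (D s)
    rwa [h2' s] at this
  have hidem : ∀ s : S, D s * D s = D s := by
    intro s
    have := h1 (D s)
    rwa [hDD] at this
  -- R of a product of projections is itself
  have hRDD : ∀ u v : S, R (D u * D v) = D u * D v := by
    intro u v
    rw [← h4 u v, h2', h4]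
  -- Key lemma: if x = g y h with g, h projections then x = D x * y * R x
  have hkey : ∀ x y p q : S, x = D p * y * D q → x = D x * y * R x := by
    intro x y p q hx
    have hDx : D x = D p * D (y * D q) := by
      rw [hx, mul_assoc, h3, h4]
    have hDxP : D x * D p = D x := by
      rw [hDx, mul_assoc, hcomm, ← mul_assoc, hidem]
    have hRx : R x = R (D p * y) * D q := by
      rw [hx, h3', ← h2 (D p * y), hRDD, h2]
    have hQRx : D q * R x = R x := by
      rw [hRx, ← h2 (D p * y), ← mul_assoc, hcomm, mul_assoc, hidem]
    have hx2 : x = D x * y * D q := by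
      calc x = D x * x := (h1 x).symm
        _ = D x * (D p * y * D q) := by rw [← hx]
        _ = D x * y * D q := by
            rw [mul_assoc (D p) y (D q), ← mul_assoc (D x) (D p) (y * D q), hDxP,
              ← mul_assoc]
    calc x = x * R x := (h1' x).symm
      _ = D x * y * D q * R x := by rw [← hx2]
      _ = D x * y * R x := by rw [mul_assoc (D x * y) (D q) (R x), hQRx]
  constructor
  · intro hcompat s t e he
    obtain ⟨a, rfl⟩ := he
    have hse : s * D a = D (s * D a) * s * R (s * D a) := by
      apply hkey (s * D a) s (s * D a) a
      rw [mul_assoc, h1]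
    have ht : t = D t * t * R t := by rw [h1, h1']
    have := hcompat (s * D a) s t t hse ht
    exact this
  · intro hset x₁ y₁ x₂ y₂ hx1 hx2
    have hmem : R x₁ * D x₂ ∈ Set.range D := ⟨D (R x₁) * D x₂, by rw [h4, h2]⟩
    have hmid := hset y₁ y₂ (R x₁ * D x₂) hmem
    have hDq : D (R (y₁ * (R x₁ * D x₂) * y₂) * R x₂) = R (y₁ * (R x₁ * D x₂) * y₂) * R x₂ := by
      conv_lhs => rw [← h2 (y₁ * (R x₁ * D x₂) * y₂), ← h2 x₂]
      rw [h4, h2, h2]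
    refine hkey (x₁ * x₂) (y₁ * y₂) (D x₁ * D (y₁ * (R x₁ * D x₂) * y₂)) (R (y₁ * (R x₁ * D x₂) * y₂) * R x₂) ?_
    rw [h4, hDq]
    conv_lhs => rw [hx1, hx2]
    calc D x₁ * y₁ * R x₁ * (D x₂ * y₂ * R x₂)
        = D x₁ * (y₁ * (R x₁ * D x₂) * y₂) * R x₂ := by simp only [mul_assoc]
      _ = D x₁ * (D (y₁ * (R x₁ * D x₂) * y₂) * (y₁ * y₂) * R (y₁ * (R x₁ * D x₂) * y₂)) * R x₂ := by conv_lhs => rw [hmid]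
      _ = D x₁ * D (y₁ * (R x₁ * D x₂) * y₂) * (y₁ * y₂) * (R (y₁ * (R x₁ * D x₂) * y₂) * R x₂) := by simp only [mul_assoc]
end

section
/- If (S,·,D,R,≤) is an ordered Ehresmann semigroup satisfying (OS4) (s ≤ t, D(s) = D(t), R(s) = R(t) imply s = t), then ≤ equals ≤_e, and consequently S is de Barros. -/
theorem stmt10 {S : Type*} [Semigroup S] [PartialOrder S] (D R : S → S)
    (h1 : ∀ s : S, D s * s = s) (h1' : ∀ s : S, s * R s = s)
    (h2 : ∀ s : S, D (R s) = R s) (h2' : ∀ s : S, R (D s) = D s)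
    (h3 : ∀ s t : S, D (s * t) = D (s * D t)) (h3' : ∀ s t : S, R (s * t) = R (R s * t))
    (h4 : ∀ s t : S, D (D s * D t) = D s * D t)
    (hcomm : ∀ s t : S, D s * D t = D t * D s)
    (hmono : ∀ a b : S, a ≤ b → D a ≤ D b ∧ R a ≤ R b)
    (hmul : ∀ a b c d : S, a ≤ b → c ≤ d → a * c ≤ b * d)
    (hos6 : ∀ (a : S), ∀ e ∈ Set.range D, a * e ≤ a ∧ e * a ≤ a)
    (hosi : ∀ (a : S), ∀ e ∈ Set.range D, a ≤ e → a ∈ Set.range D)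
    (hos4 : ∀ s t : S, s ≤ t → D s = D t → R s = R t → s = t) :
    (∀ s t : S, s ≤ t ↔ s = D s * t * R s) ∧
    (∀ x₁ y₁ x₂ y₂ : S, x₁ = D x₁ * y₁ * R x₁ → x₂ = D x₂ * y₂ * R x₂ →
        x₁ * x₂ = D (x₁ * x₂) * (y₁ * y₂) * R (x₁ * x₂)) := by
  have proj_R : ∀ e : S, D e = e → R e = e := by
    intro e he
    have := h2' e
    rwa [he] at this
  have key : ∀ s t : S, s ≤ t ↔ s = D s * t * R s := by
    intro s t
    constructor
    · intro hst
      set u := D s * t * R s with hu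
      have hsu : s ≤ u := by
        calc s = D s * s * R s := by rw [h1, h1']
        _ ≤ D s * t * R s := hmul _ _ _ _ (hmul _ _ _ _ le_rfl hst) le_rfl
      have hDu : D u = D s * D (t * R s) := by
        rw [hu, mul_assoc, h3 (D s), h4]
      have hDle : D u ≤ D s := by
        rw [hDu]
        exact (hos6 (D s) (D (t * R s)) ⟨_, rfl⟩).1
      have hD : D s = D u := le_antisymm (hmono s u hsu).1 hDle
      have hp : D (R (D s * t) * R s) = R (D s * t) * R s := by
        have := h4 (R (D s * t)) (R s)
        rwa [h2, h2] at this
      have hRu : R u = R (D s * t) * R s := by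
        rw [hu, h3']
        exact proj_R _ hp
      have hRle : R u ≤ R s := by
        rw [hRu]
        exact (hos6 (R s) (R (D s * t)) ⟨_, h2 _⟩).2
      have hR : R s = R u := le_antisymm (hmono s u hsu).2 hRle
      exact hos4 s u hsu hD hR
    · intro h
      calc s = D s * t * R s := h
      _ ≤ D s * t := (hos6 (D s * t) (R s) ⟨R s, h2 s⟩).1
      _ ≤ t := (hos6 t (D s) ⟨s, rfl⟩).2
  refine ⟨key, fun x₁ y₁ x₂ y₂ hx₁ hx₂ => ?_⟩
  exact (key _ _).mp (hmul _ _ _ _ ((key _ _).mpr hx₁) ((key _ _).mpr hx₂))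
end

section
/- For ordered Ehresmann semigroups, (OS4) implies (OS7): if s ≤ t, D(s) = D(t), R(s) = R(t) always imply s = t, then whenever u ≤ st there exist s' ≤ s and t' ≤ t with u = s't'. -/
theorem stmt12 {S : Type*} [Semigroup S] [PartialOrder S] (D R : S → S)
    (h1 : ∀ s : S, D s * s = s) (h1' : ∀ s : S, s * R s = s)
    (h2 : ∀ s : S, D (R s) = R s) (h2' : ∀ s : S, R (D s) = D s)
    (h3 : ∀ s t : S, D (s * t) = D (s * D t)) (h3' : ∀ s t : S, R (s * t) = R (R s * t))
    (h4 : ∀ s t : S, D (D s * D t) = D s * D t)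
    (hcomm : ∀ s t : S, D s * D t = D t * D s)
    (hmono : ∀ a b : S, a ≤ b → D a ≤ D b ∧ R a ≤ R b)
    (hmul : ∀ a b c d : S, a ≤ b → c ≤ d → a * c ≤ b * d)
    (hos6 : ∀ (a : S), ∀ e ∈ Set.range D, a * e ≤ a ∧ e * a ≤ a)
    (hosi : ∀ (a : S), ∀ e ∈ Set.range D, a ≤ e → a ∈ Set.range D)
    (hos4 : ∀ s t : S, s ≤ t → D s = D t → R s = R t → s = t) :
    ∀ u s t : S, u ≤ s * t → ∃ s' t' : S, s' ≤ s ∧ t' ≤ t ∧ u = s' * t' := by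
  -- auxiliary facts about projections
  have hDD : ∀ x : S, D (D x) = D x := by
    intro x
    conv_lhs => rw [← h2' x]
    rw [h2, h2']
  have hidem : ∀ x : S, D x * D x = D x := by
    intro x
    have := h1 (D x)
    rwa [hDD] at this
  -- for projections e ≤ f (e = D x, f = D y): e*f = e and f*e = e
  have key : ∀ x y : S, D x ≤ D y → D x * D y = D x ∧ D y * D x = D x := by
    intro x y hxy
    constructor
    · refine le_antisymm ((hos6 (D x) (D y) ⟨y, rfl⟩).1) ?_
      calc D x = D x * D x := (hidem x).symm
        _ ≤ D x * D y := hmul _ _ _ _ le_rfl hxy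
    · refine le_antisymm ((hos6 (D x) (D y) ⟨y, rfl⟩).2) ?_
      calc D x = D x * D x := (hidem x).symm
        _ ≤ D y * D x := hmul _ _ _ _ hxy le_rfl
  intro u s t hu
  refine ⟨D u * s, t * R u, (hos6 s (D u) ⟨u, rfl⟩).2, (hos6 t (R u) ⟨R u, h2 u⟩).1, ?_⟩
  -- u ≤ (D u * s) * (t * R u)
  have huv : u ≤ (D u * s) * (t * R u) := by
    calc u = (D u * u) * R u := by rw [h1, h1']
      _ ≤ (D u * (s * t)) * R u := hmul _ _ _ _ (hmul _ _ _ _ le_rfl hu) le_rfl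
      _ = (D u * s) * (t * R u) := by simp only [mul_assoc]
  -- D ((D u * s) * (t * R u)) = D u
  have hD : D ((D u * s) * (t * R u)) = D u := by
    have hw : u ≤ (s * t) * R u := by
      calc u = u * R u := (h1' u).symm
        _ ≤ (s * t) * R u := hmul _ _ _ _ hu le_rfl
    have hle : D u ≤ D ((s * t) * R u) := (hmono _ _ hw).1
    calc D ((D u * s) * (t * R u))
        = D (D u * ((s * t) * R u)) := by simp only [mul_assoc]
      _ = D (D u * D ((s * t) * R u)) := h3 _ _
      _ = D u * D ((s * t) * R u) := h4 _ _
      _ = D u := (key _ _ hle).1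
  -- R ((D u * s) * (t * R u)) = R u
  have hR : R ((D u * s) * (t * R u)) = R u := by
    have hw : u ≤ D u * (s * t) := by
      calc u = D u * u := (h1 u).symm
        _ ≤ D u * (s * t) := hmul _ _ _ _ le_rfl hu
    have hle : R u ≤ R (D u * (s * t)) := (hmono _ _ hw).2
    -- rewrite both R's as D's to apply key
    have hle' : D (R u) ≤ D (R (D u * (s * t))) := by rw [h2, h2]; exact hle
    have hkey := (key _ _ hle').2
    rw [h2, h2] at hkey
    calc R ((D u * s) * (t * R u))
        = R ((D u * (s * t)) * R u) := by simp only [mul_assoc]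
      _ = R (R (D u * (s * t)) * R u) := h3' _ _
      _ = R (D (R (D u * (s * t))) * D (R u)) := by rw [h2, h2]
      _ = R (D (D (R (D u * (s * t))) * D (R u))) := by rw [h4]
      _ = D (D (R (D u * (s * t))) * D (R u)) := h2' _
      _ = D (R (D u * (s * t))) * D (R u) := h4 _ _
      _ = R u := by rw [h2, h2]; exact hkey
  exact hos4 u _ huv hD.symm hR.symm
end

section
/- If (S,·,D,R,≤) is an ordered Ehresmann semigroup satisfying (OS4A) (s ≤ t and D(s) = D(t) imply s = t), then S satisfies the left ample identity xD(y) = D(xy)x, i.e., it is a left restriction semigroup with range. -/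
theorem stmt14 {S : Type*} [Semigroup S] [PartialOrder S] (D R : S → S)
    (h1 : ∀ s : S, D s * s = s) (h1' : ∀ s : S, s * R s = s)
    (h2 : ∀ s : S, D (R s) = R s) (h2' : ∀ s : S, R (D s) = D s)
    (h3 : ∀ s t : S, D (s * t) = D (s * D t)) (h3' : ∀ s t : S, R (s * t) = R (R s * t))
    (h4 : ∀ s t : S, D (D s * D t) = D s * D t)
    (hcomm : ∀ s t : S, D s * D t = D t * D s)
    (hmono : ∀ a b : S, a ≤ b → D a ≤ D b ∧ R a ≤ R b)
    (hmul : ∀ a b c d : S, a ≤ b → c ≤ d → a * c ≤ b * d)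
    (hos6 : ∀ (a : S), ∀ e ∈ Set.range D, a * e ≤ a ∧ e * a ≤ a)
    (hosi : ∀ (a : S), ∀ e ∈ Set.range D, a ≤ e → a ∈ Set.range D)
    (hos4a : ∀ s t : S, s ≤ t → D s = D t → s = t) :
    ∀ x y : S, x * D y = D (x * y) * x := by
  -- D is idempotent as a function on its range
  have hDD : ∀ s : S, D (D s) = D s := fun s => by rw [← h2' s, h2]
  -- projections are idempotent
  have hid : ∀ s : S, D s * D s = D s := fun s => by
    have := h1 (D s)
    rwa [hDD] at this
  intro x y
  set a := x * D y with ha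
  set b := D (x * y) * x with hb
  -- a ≤ x
  have hax : a ≤ x := (hos6 x (D y) ⟨y, rfl⟩).1
  -- D a = D (x*y)
  have hDa : D a = D (x * y) := (h3 x y).symm
  -- D (x*y) ≤ D x
  have hle : D (x * y) ≤ D x := hDa ▸ (hmono a x hax).1
  -- D(x*y) * D x = D (x*y)
  have hef : D (x * y) * D x = D (x * y) := by
    apply le_antisymm (hos6 _ (D x) ⟨x, rfl⟩).1
    calc D (x * y) = D (x * y) * D (x * y) := (hid _).symm
      _ ≤ D (x * y) * D x := hmul _ _ _ _ le_rfl hle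
  -- D b = D (x*y)
  have hDb : D b = D (x * y) := by
    rw [hb, h3, ← hDD (x * y), h4, hDD, hef]
  -- a ≤ b
  have hab : a ≤ b := by
    calc a = D a * a := (h1 a).symm
      _ ≤ D a * x := hmul _ _ _ _ le_rfl hax
      _ = b := by rw [hDa]
  exact hos4a a b hab (hDa.trans hDb.symm)
end

section
/- If (S,·,D,R,≤) is an ordered Ehresmann semigroup, then the associated category (with partial product s∘t = st defined when R(s) = D(t)) satisfies (OC6a): for any a ∈ S and projection e with e ≤ D(a), the element ea is the maximum of {y ≤ a : D(y) ≤ e}, and D(ea) = e. -/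
theorem stmt15 {S : Type*} [Semigroup S] [PartialOrder S] (D R : S → S)
    (h1 : ∀ s : S, D s * s = s) (h1' : ∀ s : S, s * R s = s)
    (h2 : ∀ s : S, D (R s) = R s) (h2' : ∀ s : S, R (D s) = D s)
    (h3 : ∀ s t : S, D (s * t) = D (s * D t)) (h3' : ∀ s t : S, R (s * t) = R (R s * t))
    (h4 : ∀ s t : S, D (D s * D t) = D s * D t)
    (hcomm : ∀ s t : S, D s * D t = D t * D s)
    (hmono : ∀ a b : S, a ≤ b → D a ≤ D b ∧ R a ≤ R b)
    (hmul : ∀ a b c d : S, a ≤ b → c ≤ d → a * c ≤ b * d)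
    (hos6 : ∀ (a : S), ∀ e ∈ Set.range D, a * e ≤ a ∧ e * a ≤ a)
    (hosi : ∀ (a : S), ∀ e ∈ Set.range D, a ≤ e → a ∈ Set.range D) :
    ∀ (a : S), ∀ e ∈ Set.range D, e ≤ D a →
      e * a ≤ a ∧ D (e * a) = e ∧ (∀ y : S, y ≤ a → D y ≤ e → y ≤ e * a) := by
  -- idempotency of projections
  have idem : ∀ s : S, D s * D s = D s := by
    intro s
    have := h1' (D s)
    rwa [h2' s] at this
  have hDD : ∀ s : S, D (D s) = D s := by
    intro s
    calc D (D s) = D (D s * D s) := by rw [idem]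
    _ = D s * D s := h4 s s
    _ = D s := idem s
  rintro a e ⟨s, rfl⟩ he
  -- e * D a = e
  have key : D s * D a = D s := by
    apply le_antisymm
    · exact (hos6 (D s) (D a) ⟨a, rfl⟩).1
    · calc D s = D s * D s := (idem s).symm
      _ ≤ D s * D a := hmul _ _ _ _ le_rfl he
  refine ⟨?_, ?_, ?_⟩
  · have := hmul (D s) (D a) a a he le_rfl
    rwa [h1 a] at this
  · calc D (D s * a) = D (D s * D a) := h3 _ _
    _ = D (D s) := by rw [key]
    _ = D s := hDD s
  · intro y hy hDy
    calc y = D y * y := (h1 y).symm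
    _ ≤ D s * a := hmul _ _ _ _ hDy hy
end

section
/- Every ordered Ehresmann semigroup satisfies (OC7') for its associated category: if z ≤ xy with R(x) = D(y), then there exist x'' ≤ x and y'' ≤ y with R(x'') = D(y''), D(x'') = D(z), R(y'') = R(z), and z ≤ x''y''. -/
theorem stmt16 {S : Type*} [Semigroup S] [PartialOrder S] (D R : S → S)
    (h1 : ∀ s : S, D s * s = s) (h1' : ∀ s : S, s * R s = s)
    (h2 : ∀ s : S, D (R s) = R s) (h2' : ∀ s : S, R (D s) = D s)
    (h3 : ∀ s t : S, D (s * t) = D (s * D t)) (h3' : ∀ s t : S, R (s * t) = R (R s * t))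
    (h4 : ∀ s t : S, D (D s * D t) = D s * D t)
    (hcomm : ∀ s t : S, D s * D t = D t * D s)
    (hmono : ∀ a b : S, a ≤ b → D a ≤ D b ∧ R a ≤ R b)
    (hmul : ∀ a b c d : S, a ≤ b → c ≤ d → a * c ≤ b * d)
    (hos6 : ∀ (a : S), ∀ e ∈ Set.range D, a * e ≤ a ∧ e * a ≤ a)
    (hosi : ∀ (a : S), ∀ e ∈ Set.range D, a ≤ e → a ∈ Set.range D) :
    ∀ z x y : S, R x = D y → z ≤ x * y →
      ∃ x'' y'' : S, x'' ≤ x ∧ y'' ≤ y ∧ R x'' = D y'' ∧ D x'' = D z ∧ R y'' = R z ∧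
        z ≤ x'' * y'' := by
  -- preliminary lemmas
  have idemD : ∀ s : S, D s * D s = D s := by
    intro s
    have := h1' (D s)
    rwa [h2'] at this
  have idemR : ∀ s : S, R s * R s = R s := by
    intro s
    have h := h1' (R s)
    have hRR : R (R s) = R s := by
      calc R (R s) = R (D (R s)) := by rw [h2]
        _ = D (R s) := h2' _
        _ = R s := h2 s
    rwa [hRR] at h
  have le_proj : ∀ a b : S, D a ≤ D b → D a * D b = D a := by
    intro a b h
    refine le_antisymm ((hos6 (D a) (D b) ⟨b, rfl⟩).1) ?_
    calc D a = D a * D a := (idemD a).symm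
      _ ≤ D a * D b := hmul _ _ _ _ le_rfl h
  have le_projR : ∀ a b : S, R a ≤ R b → R a * R b = R a := by
    intro a b h
    have h' : D (R a) ≤ D (R b) := by rw [h2, h2]; exact h
    have := le_proj (R a) (R b) h'
    rwa [h2, h2] at this
  have Rproj : ∀ a b : S, R (R a * R b) = R a * R b := by
    intro a b
    rw [← h2 a, ← h2 b, ← h4]
    exact h2' _
  intro z x y hRD hz
  -- D z ≤ D x
  have hDzx : D z ≤ D x := by
    calc D z ≤ D (x * y) := (hmono _ _ hz).1
      _ = D (x * D y) := h3 x y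
      _ ≤ D x := (hmono _ _ ((hos6 x (D y) ⟨y, rfl⟩).1)).1
  set x1 : S := D z * x with hx1def
  have hDx1 : D x1 = D z := by
    calc D (D z * x) = D (D z * D x) := h3 _ _
      _ = D z * D x := h4 _ _
      _ = D z := le_proj z x hDzx
  set y0 : S := R x1 * y with hy0def
  set y2 : S := y0 * R z with hy2def
  set x2 : S := x1 * D y2 with hx2def
  have hz1 : z ≤ x1 * y0 := by
    calc z = D z * z := (h1 z).symm
      _ ≤ D z * (x * y) := hmul _ _ _ _ le_rfl hz
      _ = (D z * x) * y := (mul_assoc _ _ _).symm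
      _ = (x1 * R x1) * y := by rw [h1']
      _ = x1 * (R x1 * y) := mul_assoc _ _ _
  have hz2 : z ≤ x1 * y2 := by
    calc z = z * R z := (h1' z).symm
      _ ≤ (x1 * y0) * R z := hmul _ _ _ _ hz1 le_rfl
      _ = x1 * (y0 * R z) := mul_assoc _ _ _
  have hy0abs : R x1 * y0 = y0 := by
    calc R x1 * (R x1 * y) = (R x1 * R x1) * y := (mul_assoc _ _ _).symm
      _ = R x1 * y := by rw [idemR]
  have hRzy0 : R z ≤ R y0 := by
    have h5 := (hmono _ _ hz1).2
    rwa [h3', hy0abs] at h5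
  have hRy2 : R y2 = R z := by
    calc R (y0 * R z) = R (R y0 * R z) := h3' _ _
      _ = R y0 * R z := Rproj _ _
      _ = R z * R y0 := by rw [← h2 y0, ← h2 z]; exact hcomm _ _
      _ = R z := le_projR z y0 hRzy0
  have hDy2 : D y2 = R x1 * D (y * R z) := by
    calc D ((R x1 * y) * R z) = D (R x1 * (y * R z)) := by rw [mul_assoc]
      _ = D (R x1 * D (y * R z)) := h3 _ _
      _ = D (D (R x1) * D (y * R z)) := by rw [h2]
      _ = D (R x1) * D (y * R z) := h4 _ _
      _ = R x1 * D (y * R z) := by rw [h2]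
  have hRx2 : R x2 = D y2 := by
    calc R (x1 * D y2) = R (R x1 * D y2) := h3' _ _
      _ = R x1 * D y2 := by rw [← h2 x1, ← h4]; exact h2' _
      _ = R x1 * (R x1 * D (y * R z)) := by rw [hDy2]
      _ = (R x1 * R x1) * D (y * R z) := (mul_assoc _ _ _).symm
      _ = R x1 * D (y * R z) := by rw [idemR]
      _ = D y2 := hDy2.symm
  have hz3 : z ≤ x2 * y2 := by
    calc z ≤ x1 * y2 := hz2
      _ = x1 * (D y2 * y2) := by rw [h1]
      _ = (x1 * D y2) * y2 := (mul_assoc _ _ _).symm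
  have hDx2 : D x2 = D z := by
    refine le_antisymm ?_ ?_
    · have h5 : x2 ≤ x1 := (hos6 x1 (D y2) ⟨y2, rfl⟩).1
      have h6 := (hmono _ _ h5).1
      rwa [hDx1] at h6
    · calc D z ≤ D (x2 * y2) := (hmono _ _ hz3).1
        _ = D (x2 * D y2) := h3 _ _
        _ = D (x2 * R x2) := by rw [hRx2]
        _ = D x2 := by rw [h1']
  have hx2x : x2 ≤ x :=
    le_trans (hos6 x1 (D y2) ⟨y2, rfl⟩).1 ((hos6 x (D z) ⟨z, rfl⟩).2)
  have hy2y : y2 ≤ y :=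
    le_trans (hos6 y0 (R z) ⟨R z, h2 z⟩).1 ((hos6 y (R x1) ⟨R x1, h2 x1⟩).2)
  exact ⟨x2, y2, hx2x, hy2y, hRx2, hDx2, hRy2, hz3⟩
end

section
/- In an ordered Ehresmann semigroup, for all s, t: s ≤ t if and only if D(s) ≤ D(t), R(s) ≤ R(t), and s ≤ D(s)tR(s). -/
theorem stmt17 {S : Type*} [Semigroup S] [PartialOrder S] (D R : S → S)
    (h1 : ∀ s : S, D s * s = s) (h1' : ∀ s : S, s * R s = s)
    (h2 : ∀ s : S, D (R s) = R s) (h2' : ∀ s : S, R (D s) = D s)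
    (h3 : ∀ s t : S, D (s * t) = D (s * D t)) (h3' : ∀ s t : S, R (s * t) = R (R s * t))
    (h4 : ∀ s t : S, D (D s * D t) = D s * D t)
    (hcomm : ∀ s t : S, D s * D t = D t * D s)
    (hmono : ∀ a b : S, a ≤ b → D a ≤ D b ∧ R a ≤ R b)
    (hmul : ∀ a b c d : S, a ≤ b → c ≤ d → a * c ≤ b * d)
    (hos6 : ∀ (a : S), ∀ e ∈ Set.range D, a * e ≤ a ∧ e * a ≤ a)
    (hosi : ∀ (a : S), ∀ e ∈ Set.range D, a ≤ e → a ∈ Set.range D) :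
    ∀ s t : S, s ≤ t ↔ (D s ≤ D t ∧ R s ≤ R t ∧ s ≤ D s * t * R s) := by
  intro s t
  constructor
  · intro h
    refine ⟨(hmono s t h).1, (hmono s t h).2, ?_⟩
    calc s = D s * s * R s := by rw [h1, h1']
    _ ≤ D s * t * R s := hmul _ _ _ _ (hmul _ _ _ _ le_rfl h) le_rfl
  · rintro ⟨-, -, h⟩
    have hD : D s ∈ Set.range D := ⟨s, rfl⟩
    have hR : R s ∈ Set.range D := ⟨R s, h2 s⟩
    calc s ≤ D s * t * R s := h
    _ ≤ D s * t := (hos6 _ _ hR).1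
    _ ≤ t := (hos6 _ _ hD).2
end

section
/- In an Ehresmann semigroup, the relations ≤_l (s ≤_l t iff s = D(s)t) and ≤_r (s ≤_r t iff s = tR(s)) permute: ≤_l ∘ ≤_r = ≤_r ∘ ≤_l as relation composites, and both equal ≤_e (s ≤_e t iff s = gth for some projections g, h). -/
theorem stmt19 {S : Type*} [Semigroup S] (D R : S → S)
    (h1 : ∀ s : S, D s * s = s) (h1' : ∀ s : S, s * R s = s)
    (h2 : ∀ s : S, D (R s) = R s) (h2' : ∀ s : S, R (D s) = D s)
    (h3 : ∀ s t : S, D (s * t) = D (s * D t)) (h3' : ∀ s t : S, R (s * t) = R (R s * t))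
    (h4 : ∀ s t : S, D (D s * D t) = D s * D t)
    (hcomm : ∀ s t : S, D s * D t = D t * D s) :
    ∀ s t : S,
      ((∃ u : S, s = D s * u ∧ u = t * R u) ↔ (∃ u : S, s = u * R s ∧ u = D u * t)) ∧
      ((∃ u : S, s = D s * u ∧ u = t * R u) ↔
        (∃ g ∈ Set.range D, ∃ h ∈ Set.range D, s = g * t * h)) := by
  -- R of a product of projections is itself
  have hRproj : ∀ x y : S, R (D x * D y) = D x * D y := by
    intro x y
    conv_lhs => rw [← h4 x y]
    rw [h2', h4]
  intro s t
  have L : (∃ u : S, s = D s * u ∧ u = t * R u) ↔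
      (∃ g ∈ Set.range D, ∃ h ∈ Set.range D, s = g * t * h) := by
    constructor
    · rintro ⟨u, hs, hu⟩
      refine ⟨D s, ⟨s, rfl⟩, R u, ⟨R u, h2 u⟩, ?_⟩
      rw [mul_assoc, ← hu, ← hs]
    · rintro ⟨g, ⟨a, rfl⟩, h, ⟨b, rfl⟩, hst⟩
      refine ⟨t * D b, ?_, ?_⟩
      · have hsu : s = D a * (t * D b) := by rw [hst, mul_assoc]
        have hDs : D s = D a * D (t * D b) := by
          rw [hsu, h3, h4]
        rw [hDs, mul_assoc, h1, ← hsu]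
      · have hR : R (t * D b) = R t * D b := by
          rw [h3']
          conv_lhs => rw [← h2 t]
          rw [hRproj, h2]
        rw [hR, ← mul_assoc, h1']
  have Rr : (∃ u : S, s = u * R s ∧ u = D u * t) ↔
      (∃ g ∈ Set.range D, ∃ h ∈ Set.range D, s = g * t * h) := by
    constructor
    · rintro ⟨u, hs, hu⟩
      refine ⟨D u, ⟨u, rfl⟩, R s, ⟨R s, h2 s⟩, ?_⟩
      rw [← hu, ← hs]
    · rintro ⟨g, ⟨a, rfl⟩, h, ⟨b, rfl⟩, hst⟩
      refine ⟨D a * t, ?_, ?_⟩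
      · have hRs : R s = R (D a * t) * D b := by
          rw [hst, h3']
          conv_lhs => rw [← h2 (D a * t)]
          rw [hRproj, h2]
        rw [hRs, ← mul_assoc, h1', ← hst]
      · rw [h3, h4, mul_assoc, h1]
  exact ⟨L.trans Rr.symm, L⟩
end
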